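/- arXiv:2501.01655 — 2 statements merged into one kernel-verified Lean document; each statement's English description precedes it below -/
import Mathlib

section
/- Let A ∈ ℝ^{m×n}, C ∈ ℝ^{p×n}, G = AᵀA + CᵀC. Then (P_{R(G)} − C_A† C) A† = A_{N(C)}†, i.e., for every b ∈ ℝᵐ, the vector (P_{R(G)} − C_A† C) A† b is the minimum 2-norm minimizer of ‖Ax − b‖₂ over x ∈ N(C). -/
/-!
Let `u = A†b`, `p = P_{R(G)} u` and `w = C_A†(Cu)`. Since `⟪Gx, y⟫ = ⟪Ax, Ay⟫ + ⟪Cx, Cy⟫`,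
`R(G)ᗮ = N(A) ∩ N(C)`; so `u - p ∈ N(A) ∩ N(C)` and `p ⊥ N(A) ∩ N(C)`. The weighted pseudoinverse
gives `Cw = Cu`, `‖Aw‖` minimal among solutions of `Cy = Cu`, and `w ⊥ N(A) ∩ N(C)`. Then
`x = p - w ∈ N(C)` and, by Pythagoras at the least-squares solution `u`,
`‖Ax - b‖² = ‖Au - b‖² + ‖Aw‖²`, which is minimal over `N(C)` because `u - v` solves `Cy = Cu`
for every `v ∈ N(C)`. Any other minimizer `v` over `N(C)` has `Av = Ax`, so `v - x` lies in
`N(A) ∩ N(C)`, is orthogonal to `x`, and `‖x‖ ≤ ‖v‖`.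
-/

open RealInnerProductSpace Matrix

theorem Matrix.inner_toEuclideanLin_transpose {m n : Type*} [Fintype m] [Fintype n]
    [DecidableEq m] [DecidableEq n] (A : Matrix m n ℝ)
    (z : EuclideanSpace ℝ m) (y : EuclideanSpace ℝ n) :
    ⟪toEuclideanLin Aᵀ z, y⟫ = ⟪z, toEuclideanLin A y⟫ := by
  rw [← conjTranspose_eq_transpose_of_trivial, toEuclideanLin_conjTranspose_eq_adjoint]
  exact LinearMap.adjoint_inner_left _ _ _

theorem Matrix.inner_toEuclideanLin_gram {m n p : Type*} [Fintype m] [Fintype n] [Fintype p]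
    [DecidableEq m] [DecidableEq n] [DecidableEq p]
    (A : Matrix m n ℝ) (C : Matrix p n ℝ) (x y : EuclideanSpace ℝ n) :
    ⟪toEuclideanLin (Aᵀ * A + Cᵀ * C) x, y⟫ =
      ⟪toEuclideanLin A x, toEuclideanLin A y⟫ + ⟪toEuclideanLin C x, toEuclideanLin C y⟫ := by
  rw [map_add, toLpLin_mul_same, toLpLin_mul_same]
  simp only [LinearMap.add_apply, LinearMap.comp_apply, inner_add_left,
    inner_toEuclideanLin_transpose]

section LeastSquares

variable {E F H : Type*} [NormedAddCommGroup E] [InnerProductSpace ℝ E]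
  [NormedAddCommGroup F] [InnerProductSpace ℝ F] [NormedAddCommGroup H] [InnerProductSpace ℝ H]

def IsLeastSquares (T : E →ₗ[ℝ] F) (b : F) (x : E) : Prop :=
  ∀ y, ‖T x - b‖ ≤ ‖T y - b‖

theorem inner_eq_zero_of_forall_norm_le_norm_add_smul {c d : E}
    (h : ∀ t : ℝ, ‖c‖ ≤ ‖c + t • d‖) : ⟪c, d⟫ = 0 := by
  have hquad : ∀ t : ℝ, 0 ≤ 2 * t * ⟪c, d⟫ + t ^ 2 * ‖d‖ ^ 2 := by
    intro t
    have := pow_le_pow_left₀ (norm_nonneg _) (h t) 2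
    rw [norm_add_sq_real, real_inner_smul_right, norm_smul, mul_pow, Real.norm_eq_abs,
      sq_abs] at this
    linarith
  have hs : 0 < ‖d‖ ^ 2 + 1 := by positivity
  have := hquad (-⟪c, d⟫ / (‖d‖ ^ 2 + 1))
  rw [div_pow, neg_sq] at this
  field_simp at this
  nlinarith [sq_nonneg ⟪c, d⟫, sq_nonneg ‖d‖]

/-- The residual at a minimizer over `V` is orthogonal to `T '' V`. -/
theorem norm_sub_sq_eq_of_forall_norm_le {T : E →ₗ[ℝ] F} {V : Submodule ℝ E} {b : F} {x : E}
    (hx : x ∈ V) (hmin : ∀ y ∈ V, ‖T x - b‖ ≤ ‖T y - b‖) {v : E} (hv : v ∈ V) :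
    ‖T v - b‖ ^ 2 = ‖T x - b‖ ^ 2 + ‖T (v - x)‖ ^ 2 := by
  have horth : ⟪T x - b, T (v - x)⟫ = 0 := by
    refine inner_eq_zero_of_forall_norm_le_norm_add_smul fun t => ?_
    have := hmin (x + t • (v - x)) (V.add_mem hx (V.smul_mem t (V.sub_mem hv hx)))
    rwa [map_add, map_smul, add_sub_right_comm] at this
  rw [show T v - b = (T x - b) + T (v - x) by rw [map_sub]; abel, norm_add_sq_real, horth]
  ring

theorem norm_le_of_forall_norm_le_of_mem_orthogonal {T : E →ₗ[ℝ] F} {V : Submodule ℝ E} {b : F}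
    {x : E} (hx : x ∈ V) (hmin : ∀ y ∈ V, ‖T x - b‖ ≤ ‖T y - b‖)
    (hperp : x ∈ (LinearMap.ker T ⊓ V)ᗮ) {v : E} (hv : v ∈ V)
    (hvmin : ∀ y ∈ V, ‖T v - b‖ ≤ ‖T y - b‖) : ‖x‖ ≤ ‖v‖ := by
  have hTz : T (v - x) = 0 := by
    have hpyth := norm_sub_sq_eq_of_forall_norm_le hx hmin hv
    have hle := pow_le_pow_left₀ (norm_nonneg _) (hvmin x hx) 2
    exact norm_eq_zero.mp (by nlinarith [norm_nonneg (T (v - x))])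
  have hz : v - x ∈ LinearMap.ker T ⊓ V := ⟨hTz, V.sub_mem hv hx⟩
  have horth : ⟪x, v - x⟫ = 0 :=
    real_inner_comm x (v - x) ▸ Submodule.inner_right_of_mem_orthogonal hz hperp
  have hpyth : ‖v‖ * ‖v‖ = ‖x‖ * ‖x‖ + ‖v - x‖ * ‖v - x‖ := by
    rw [← norm_add_sq_eq_norm_sq_add_norm_sq_real horth, add_sub_cancel]
  exact (mul_self_le_mul_self_iff (norm_nonneg x) (norm_nonneg v)).mpr
    (hpyth ▸ le_add_of_nonneg_right (mul_self_nonneg _))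

theorem orthogonal_range_eq_ker_inf_ker {G : E →ₗ[ℝ] E} {T : E →ₗ[ℝ] F} {S : E →ₗ[ℝ] H}
    (hG : ∀ x y, ⟪G x, y⟫ = ⟪T x, T y⟫ + ⟪S x, S y⟫) :
    (LinearMap.range G)ᗮ = LinearMap.ker T ⊓ LinearMap.ker S := by
  ext z
  simp only [Submodule.mem_orthogonal, LinearMap.mem_range, forall_exists_index,
    forall_apply_eq_imp_iff, Submodule.mem_inf, LinearMap.mem_ker, hG]
  constructor
  · intro h
    have := h z
    rw [real_inner_self_eq_norm_sq, real_inner_self_eq_norm_sq] at this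
    constructor <;> exact norm_eq_zero.mp (by nlinarith [norm_nonneg (T z), norm_nonneg (S z)])
  · rintro ⟨hT, hS⟩ x
    rw [hT, hS, inner_zero_right, inner_zero_right, add_zero]

theorem isLeastSquares_apply_iff {S : E →ₗ[ℝ] H} {u y : E} :
    IsLeastSquares S (S u) y ↔ S y = S u := by
  refine ⟨fun hy => ?_, fun hy z => ?_⟩
  · simpa [sub_eq_zero] using hy u
  · simp [hy]

theorem mem_orthogonal_ker_inf_ker_of_norm_le {T : E →ₗ[ℝ] F} {S : E →ₗ[ℝ] H} {d : H} {w : E}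
    (hw : IsLeastSquares S d w) (hmin : ∀ y, IsLeastSquares S d y → ‖T w‖ ≤ ‖T y‖)
    (hnorm : ∀ y, (IsLeastSquares S d y ∧ ∀ z, IsLeastSquares S d z → ‖T y‖ ≤ ‖T z‖) →
      ‖w‖ ≤ ‖y‖) :
    w ∈ (LinearMap.ker T ⊓ LinearMap.ker S)ᗮ := by
  refine (Submodule.mem_orthogonal' _ _).mpr fun z ⟨hTz, hSz⟩ => ?_
  refine inner_eq_zero_of_forall_norm_le_norm_add_smul fun t => hnorm _ ⟨fun y => ?_, fun y hy => ?_⟩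
  · simpa [LinearMap.mem_ker.mp hSz] using hw y
  · simpa [LinearMap.mem_ker.mp hTz] using hmin y hy

theorem sub_isMinNormLeastSquaresOn_ker {T : E →ₗ[ℝ] F} {S : E →ₗ[ℝ] H} {b : F} {u p w : E}
    (hu : IsLeastSquares T b u) (hup : u - p ∈ LinearMap.ker T ⊓ LinearMap.ker S)
    (hp : p ∈ (LinearMap.ker T ⊓ LinearMap.ker S)ᗮ) (hSw : S w = S u)
    (hw : ∀ y, S y = S u → ‖T w‖ ≤ ‖T y‖) (hw' : w ∈ (LinearMap.ker T ⊓ LinearMap.ker S)ᗮ) :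
    p - w ∈ LinearMap.ker S ∧
      (∀ v ∈ LinearMap.ker S, ‖T (p - w) - b‖ ≤ ‖T v - b‖) ∧
      (∀ v ∈ LinearMap.ker S, (∀ v' ∈ LinearMap.ker S, ‖T v - b‖ ≤ ‖T v' - b‖) →
        ‖p - w‖ ≤ ‖v‖) := by
  obtain ⟨hTp, hSp⟩ : T u = T p ∧ S u = S p := by simpa [sub_eq_zero] using hup
  have hx : p - w ∈ LinearMap.ker S := by simp [← hSp, hSw]
  have hpyth (y : E) : ‖T y - b‖ ^ 2 = ‖T u - b‖ ^ 2 + ‖T (y - u)‖ ^ 2 :=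
    norm_sub_sq_eq_of_forall_norm_le (V := ⊤) trivial (fun y _ => hu y) trivial
  have hmin : ∀ v ∈ LinearMap.ker S, ‖T (p - w) - b‖ ≤ ‖T v - b‖ := by
    intro v hv
    have hwv : ‖T w‖ ≤ ‖T (v - u)‖ := by
      rw [← norm_neg (T (v - u)), ← map_neg, neg_sub]
      exact hw _ (by simp [LinearMap.mem_ker.mp hv])
    have hxu : T (p - w - u) = -T w := by rw [map_sub, map_sub, ← hTp]; abel
    refine (pow_le_pow_iff_left₀ (norm_nonneg _) (norm_nonneg _) two_ne_zero).mp ?_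
    rw [hpyth, hpyth v, hxu, norm_neg]
    gcongr
  exact ⟨hx, hmin, fun v hv hvmin =>
    norm_le_of_forall_norm_le_of_mem_orthogonal hx hmin (Submodule.sub_mem _ hp hw') hv hvmin⟩

end LeastSquares

/-- `(P_{R(G)} − C_A† C) A† = A_{N(C)}†`: for every `b`, the vector
`P_{R(G)}(A†b) − C_A†(C A†b)` is the minimum 2-norm minimizer of `‖Ax − b‖` over `N(C)`. -/
theorem pinv_identity_two (m n p : ℕ) (A : Matrix (Fin m) (Fin n) ℝ)
    (C : Matrix (Fin p) (Fin n) ℝ)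
    (Adag : EuclideanSpace ℝ (Fin m) → EuclideanSpace ℝ (Fin n))
    (hAdag : ∀ b : EuclideanSpace ℝ (Fin m),
      (∀ y, ‖Matrix.toEuclideanLin A (Adag b) - b‖ ≤ ‖Matrix.toEuclideanLin A y - b‖) ∧
      (∀ y, (∀ z, ‖Matrix.toEuclideanLin A y - b‖ ≤ ‖Matrix.toEuclideanLin A z - b‖) →
        ‖Adag b‖ ≤ ‖y‖))
    (CAdag : EuclideanSpace ℝ (Fin p) → EuclideanSpace ℝ (Fin n))
    (hCAdag : ∀ d : EuclideanSpace ℝ (Fin p),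
      (∀ y, ‖Matrix.toEuclideanLin C (CAdag d) - d‖ ≤ ‖Matrix.toEuclideanLin C y - d‖) ∧
      (∀ y, (∀ z, ‖Matrix.toEuclideanLin C y - d‖ ≤ ‖Matrix.toEuclideanLin C z - d‖) →
        ‖Matrix.toEuclideanLin A (CAdag d)‖ ≤ ‖Matrix.toEuclideanLin A y‖) ∧
      (∀ y, ((∀ z, ‖Matrix.toEuclideanLin C y - d‖ ≤ ‖Matrix.toEuclideanLin C z - d‖) ∧
          (∀ z, (∀ w, ‖Matrix.toEuclideanLin C z - d‖ ≤ ‖Matrix.toEuclideanLin C w - d‖) →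
            ‖Matrix.toEuclideanLin A y‖ ≤ ‖Matrix.toEuclideanLin A z‖)) → ‖CAdag d‖ ≤ ‖y‖)) :
    ∀ b : EuclideanSpace ℝ (Fin m),
      ((↑(Submodule.orthogonalProjection
            (LinearMap.range (Matrix.toEuclideanLin (Aᵀ * A + Cᵀ * C))) (Adag b)) :
          EuclideanSpace ℝ (Fin n)) - CAdag (Matrix.toEuclideanLin C (Adag b)))
        ∈ LinearMap.ker (Matrix.toEuclideanLin C) ∧
      (∀ v ∈ LinearMap.ker (Matrix.toEuclideanLin C),
        ‖Matrix.toEuclideanLin A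
            ((↑(Submodule.orthogonalProjection
                  (LinearMap.range (Matrix.toEuclideanLin (Aᵀ * A + Cᵀ * C))) (Adag b)) :
                EuclideanSpace ℝ (Fin n)) - CAdag (Matrix.toEuclideanLin C (Adag b))) - b‖ ≤
          ‖Matrix.toEuclideanLin A v - b‖) ∧
      (∀ v ∈ LinearMap.ker (Matrix.toEuclideanLin C),
        (∀ w ∈ LinearMap.ker (Matrix.toEuclideanLin C),
          ‖Matrix.toEuclideanLin A v - b‖ ≤ ‖Matrix.toEuclideanLin A w - b‖) →
        ‖(↑(Submodule.orthogonalProjection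
              (LinearMap.range (Matrix.toEuclideanLin (Aᵀ * A + Cᵀ * C))) (Adag b)) :
            EuclideanSpace ℝ (Fin n)) - CAdag (Matrix.toEuclideanLin C (Adag b))‖ ≤ ‖v‖) := by
  intro b
  set T := Matrix.toEuclideanLin A
  set S := Matrix.toEuclideanLin C
  set K := LinearMap.range (Matrix.toEuclideanLin (Aᵀ * A + Cᵀ * C))
  obtain ⟨hw, hwmin, hwnorm⟩ := hCAdag (S (Adag b))
  have hK : Kᗮ = LinearMap.ker T ⊓ LinearMap.ker S :=
    orthogonal_range_eq_ker_inf_ker (Matrix.inner_toEuclideanLin_gram A C)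
  exact sub_isMinNormLeastSquaresOn_ker (hAdag b).1
    (hK ▸ K.sub_starProjection_mem_orthogonal (Adag b))
    (hK ▸ K.le_orthogonal_orthogonal (K.starProjection_apply_mem (Adag b)))
    (isLeastSquares_apply_iff.mp hw) (fun y hy => hwmin y (isLeastSquares_apply_iff.mpr hy))
    (mem_orthogonal_ker_inf_ker_of_norm_le hw hwmin hwnorm)
end

section
/- Let A ∈ ℝ^{m×n}, C ∈ ℝ^{p×n}, G = AᵀA + CᵀC, and let w be the minimum 2-norm solution of the GLS problem min ‖Ax‖₂ subject to ‖Cx − g‖₂ minimal (for any g ∈ ℝᵖ). Then AᵀA w is orthogonal to the null space of C. -/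
open Matrix

/-! If `w` minimises `‖A x‖` over the feasible set, which is invariant under translation by
`N(C)`, then `t ↦ ‖A (w + t z)‖²` is minimal at `t = 0` for every `z ∈ N(C)`; this quadratic
in `t` has nonpositive discriminant, which forces `⟪A w, A z⟫ = ⟪AᵀA w, z⟫ = 0`. -/

theorem real_inner_eq_zero_of_forall_norm_le_norm_add_smul {F : Type*} [NormedAddCommGroup F]
    [InnerProductSpace ℝ F] {u v : F} (h : ∀ t : ℝ, ‖u‖ ≤ ‖u + t • v‖) : inner ℝ u v = 0 := by
  have hquad : ∀ t : ℝ, 0 ≤ ‖v‖ ^ 2 * (t * t) + 2 * inner ℝ u v * t + 0 := fun t => by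
    have hsq := pow_le_pow_left₀ (norm_nonneg u) (h t) 2
    rw [norm_add_sq_real, real_inner_smul_right, norm_smul, Real.norm_eq_abs, mul_pow, sq_abs]
      at hsq
    linarith
  have hdiscrim := discrim_le_zero hquad
  rw [discrim] at hdiscrim
  nlinarith [sq_nonneg (inner ℝ u v)]

theorem LinearMap.real_inner_apply_eq_zero_of_forall_norm_le_norm_apply_add {E F : Type*}
    [AddCommGroup E] [Module ℝ E] [NormedAddCommGroup F] [InnerProductSpace ℝ F]
    (A : E →ₗ[ℝ] F) {K : Submodule ℝ E} {w : E} (hw : ∀ z ∈ K, ‖A w‖ ≤ ‖A (w + z)‖)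
    {z : E} (hz : z ∈ K) : inner ℝ (A w) (A z) = 0 :=
  real_inner_eq_zero_of_forall_norm_le_norm_add_smul fun t => by
    simpa only [map_add, map_smul] using hw (t • z) (K.smul_mem t hz)

theorem Matrix.real_inner_toEuclideanLin_transpose_apply {m n : Type*} [Fintype m] [Fintype n]
    [DecidableEq m] [DecidableEq n] (A : Matrix m n ℝ) (x : EuclideanSpace ℝ m) (z : EuclideanSpace ℝ n) :
    inner ℝ (toEuclideanLin Aᵀ x) z = inner ℝ x (toEuclideanLin A z) := by
  rw [← conjTranspose_eq_transpose_of_trivial, toEuclideanLin_conjTranspose_eq_adjoint,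
    LinearMap.adjoint_inner_left]

theorem AtAw_orthogonal_nullC_general (m n p : ℕ) (A : Matrix (Fin m) (Fin n) ℝ)
    (C : Matrix (Fin p) (Fin n) ℝ) (g : EuclideanSpace ℝ (Fin p))
    (w : EuclideanSpace ℝ (Fin n))
    (hw_feas : ∀ y, ‖Matrix.toEuclideanLin C w - g‖ ≤ ‖Matrix.toEuclideanLin C y - g‖)
    (hw_min : ∀ y, (∀ z, ‖Matrix.toEuclideanLin C y - g‖ ≤ ‖Matrix.toEuclideanLin C z - g‖) →
      ‖Matrix.toEuclideanLin A w‖ ≤ ‖Matrix.toEuclideanLin A y‖) :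
    ∀ z ∈ LinearMap.ker (Matrix.toEuclideanLin C),
      inner ℝ (Matrix.toEuclideanLin Aᵀ (Matrix.toEuclideanLin A w)) z = (0 : ℝ) := by
  intro z hz
  rw [real_inner_toEuclideanLin_transpose_apply]
  refine (toEuclideanLin A).real_inner_apply_eq_zero_of_forall_norm_le_norm_apply_add
    (fun z' hz' => hw_min _ fun y => ?_) hz
  rw [LinearMap.mem_ker] at hz'
  simpa only [map_add, hz', add_zero] using hw_feas y

/-- If `w` is the minimum 2-norm solution of the GLS problem
`min ‖Ax‖ s.t. ‖Cx − g‖ minimal`, then `AᵀA w ⟂ N(C)`. -/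
theorem AtAw_orthogonal_nullC (m n p : ℕ) (A : Matrix (Fin m) (Fin n) ℝ)
    (C : Matrix (Fin p) (Fin n) ℝ) (g : EuclideanSpace ℝ (Fin p))
    (w : EuclideanSpace ℝ (Fin n))
    (hw_feas : ∀ y, ‖Matrix.toEuclideanLin C w - g‖ ≤ ‖Matrix.toEuclideanLin C y - g‖)
    (hw_min : ∀ y, (∀ z, ‖Matrix.toEuclideanLin C y - g‖ ≤ ‖Matrix.toEuclideanLin C z - g‖) →
      ‖Matrix.toEuclideanLin A w‖ ≤ ‖Matrix.toEuclideanLin A y‖)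
    (hw_norm : ∀ y, ((∀ z, ‖Matrix.toEuclideanLin C y - g‖ ≤ ‖Matrix.toEuclideanLin C z - g‖) ∧
        (∀ z, (∀ v, ‖Matrix.toEuclideanLin C z - g‖ ≤ ‖Matrix.toEuclideanLin C v - g‖) →
          ‖Matrix.toEuclideanLin A y‖ ≤ ‖Matrix.toEuclideanLin A z‖)) → ‖w‖ ≤ ‖y‖) :
    ∀ z ∈ LinearMap.ker (Matrix.toEuclideanLin C),
      inner ℝ (Matrix.toEuclideanLin Aᵀ (Matrix.toEuclideanLin A w)) z = (0 : ℝ) :=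
  AtAw_orthogonal_nullC_general m n p A C g w hw_feas hw_min
end
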